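/- Let r ∈ [0,1], 0 < b < 1, 0 < e < 1, and p, q ≥ 0 with 0 < p + q ≤ 1. Then there exists δ* > 0 such that for every δ > δ*: the map F_{r,p,q,b,e,δ} has a unique fixed point θ* ∈ [0,1]² (i.e. a unique point with F(θ*) = θ*), and for every initial point θ₀ ∈ [0,1]² the iterates defined by θ_{k+1} = F(θ_k) converge to θ* as k → ∞. -/

import Mathlib

noncomputable def sVal (p q δ : ℝ) : ℝ := (p + q) * δ

noncomputable def aR (r p q δ t : ℝ) : ℝ := t + r * sVal p q δ

noncomputable def aB (r p q δ t : ℝ) : ℝ := 1 - t + (1 - r) * sVal p q δ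

noncomputable def P1RR (r p q b e δ x : ℝ) : ℝ :=
  e * aR r p q δ x / (1 + sVal p q δ - b * aB r p q δ x - (1 - e) * aR r p q δ x)

noncomputable def P1RB (r p q b e δ x : ℝ) : ℝ :=
  (1 - b) * aB r p q δ x / (1 + sVal p q δ - b * aB r p q δ x - (1 - e) * aR r p q δ x)

noncomputable def P1BR (r p q b e δ x : ℝ) : ℝ :=
  (1 - e) * aR r p q δ x / (1 + sVal p q δ - e * aR r p q δ x - (1 - b) * aB r p q δ x)

noncomputable def P1BB (r p q b e δ x : ℝ) : ℝ :=
  b * aB r p q δ x / (1 + sVal p q δ - e * aR r p q δ x - (1 - b) * aB r p q δ x)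

noncomputable def P2RR (r p q b e δ y : ℝ) : ℝ :=
  e * aR r p q δ y / (1 + sVal p q δ - e * aB r p q δ y - (1 - e) * aR r p q δ y)

noncomputable def P2RB (r p q b e δ y : ℝ) : ℝ :=
  (1 - e) * aB r p q δ y / (1 + sVal p q δ - e * aB r p q δ y - (1 - e) * aR r p q δ y)

noncomputable def P2BR (r p q b e δ y : ℝ) : ℝ :=
  (1 - b) * aR r p q δ y / (1 + sVal p q δ - b * aR r p q δ y - (1 - b) * aB r p q δ y)

noncomputable def P2BB (r p q b e δ y : ℝ) : ℝ :=
  b * aB r p q δ y / (1 + sVal p q δ - b * aR r p q δ y - (1 - b) * aB r p q δ y)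

noncomputable def D3 (r p q b e δ x y : ℝ) : ℝ :=
  (1 + sVal p q δ) ^ 2 - b * aR r p q δ y * aB r p q δ x - e * aR r p q δ x * aB r p q δ y
    - (1 - b) * aB r p q δ x * aB r p q δ y - (1 - e) * aR r p q δ x * aR r p q δ y

noncomputable def P3RR (r p q b e δ x y : ℝ) : ℝ :=
  e * aR r p q δ y * aR r p q δ x / D3 r p q b e δ x y

noncomputable def P3BR (r p q b e δ x y : ℝ) : ℝ :=
  (1 - e) * aB r p q δ y * aR r p q δ x / D3 r p q b e δ x y

noncomputable def P3RB (r p q b e δ x y : ℝ) : ℝ :=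
  (1 - b) * aR r p q δ y * aB r p q δ x / D3 r p q b e δ x y

noncomputable def P3BB (r p q b e δ x y : ℝ) : ℝ :=
  b * aB r p q δ y * aB r p q δ x / D3 r p q b e δ x y

noncomputable def F (r p q b e δ : ℝ) (θ : ℝ × ℝ) : ℝ × ℝ :=
  (p * (r * P1RR r p q b e δ θ.1 + (1 - r) * P1BR r p q b e δ θ.1) + q * r
      + (1 - p - q) * (P3RR r p q b e δ θ.1 θ.2 + P3BR r p q b e δ θ.1 θ.2),
   p * r + q * (r * P2RR r p q b e δ θ.2 + (1 - r) * P2BR r p q b e δ θ.2)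
      + (1 - p - q) * (P3RR r p q b e δ θ.1 θ.2 + P3RB r p q b e δ θ.1 θ.2))

noncomputable def Ci (r p q b e δ x y : ℝ) : ℝ :=
  p * r * e / (1 + sVal p q δ - b * aB r p q δ x - (1 - e) * aR r p q δ x)
    + p * (1 - r) * (1 - e) / (1 + sVal p q δ - e * aR r p q δ x - (1 - b) * aB r p q δ x)
    + (1 - p - q) * (e * aR r p q δ y + (1 - e) * aB r p q δ y) / D3 r p q b e δ x y

noncomputable def Co (r p q b e δ x y : ℝ) : ℝ :=
  q * r * e / (1 + sVal p q δ - e * aB r p q δ y - (1 - e) * aR r p q δ y)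
    + q * (1 - r) * (1 - b) / (1 + sVal p q δ - b * aR r p q δ y - (1 - b) * aB r p q δ y)
    + (1 - p - q) * (e * aR r p q δ x + (1 - b) * aB r p q δ x) / D3 r p q b e δ x y

noncomputable def CiB (r p q b e δ x y : ℝ) : ℝ := Ci (1 - r) p q e b δ (1 - x) (1 - y)

noncomputable def CoB (r p q b e δ x y : ℝ) : ℝ := Co (1 - r) p q e b δ (1 - x) (1 - y)

/-!
With `S = 1 + s = a_R(t) + a_B(t)`, each attachment probability entering `F`, and each of the
sums `P3RR + P3BR`, `P3RR + P3RB`, is a share `u a / (u a + v b)` with `(a, b) = (a_R, a_B)` at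
one coordinate and weights `u, v` that are either homophily constants or masses
`c₁ a_R + c₂ a_B` at the other coordinate. When `b, e ∈ [m, 1 - m]` every denominator is at
least `m` times its largest possible value, which makes each share `3 / (m² S)`-Lipschitz on the
unit square in the sup metric. As `F` is a convex combination of such shares and of `r`, it maps
the square into itself, and once `m² S ≥ 6`, i.e. for `δ` large, it is a `1/2`-contraction
there, so Banach's fixed point theorem applies.
-/

open Set Filter Topology

theorem LipschitzOnWith.exists_unique_fixedPoint_tendsto {α : Type*} [MetricSpace α]
    {K : NNReal} {f : α → α} {s : Set α} (hf : LipschitzOnWith K f s) (hK : K < 1)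
    (hsc : IsComplete s) (hsf : MapsTo f s s) {x₀ : α} (hx₀ : x₀ ∈ s) :
    ∃ x ∈ s, f x = x ∧ (∀ y ∈ s, f y = y → y = x) ∧
      ∀ y ∈ s, Tendsto (fun n ↦ f^[n] y) atTop (𝓝 x) := by
  have hc : ContractingWith K (hsf.restrict f s s) := ⟨hK, fun a b ↦ hf a.2 b.2⟩
  have huniq : ∀ x ∈ s, f x = x → ∀ y ∈ s, f y = y → y = x := by
    intro x hx hfx y hy hfy
    have h := (lipschitzOnWith_iff_dist_le_mul.1 hf) y hy x hx
    rw [hfx, hfy] at h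
    have hK' : (K : ℝ) < 1 := hK
    exact dist_le_zero.1 (by nlinarith [dist_nonneg (x := y) (y := x)])
  obtain ⟨x, hxs, hfx, -, -⟩ := hc.exists_fixedPoint' hsc hsf hx₀ (edist_ne_top _ _)
  refine ⟨x, hxs, hfx, fun y hy hfy ↦ huniq x hxs hfx y hy hfy, fun y hy ↦ ?_⟩
  obtain ⟨z, hzs, hfz, hz, -⟩ := hc.exists_fixedPoint' hsc hsf hy (edist_ne_top _ _)
  rwa [huniq x hxs hfx z hzs hfz] at hz

noncomputable def share (u v a b : ℝ) : ℝ := u * a / (u * a + v * b)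

theorem share_mem_Icc {u v a b : ℝ} (hua : 0 ≤ u * a) (hvb : 0 ≤ v * b) :
    share u v a b ∈ Icc 0 1 :=
  ⟨div_nonneg hua (add_nonneg hua hvb), div_le_one_of_le₀ (le_add_of_nonneg_right hvb)
    (add_nonneg hua hvb)⟩

theorem abs_share_sub_share_le {m U S u v u' v' a b a' b' : ℝ} (hm : 0 < m) (hU : 0 < U)
    (hS : 0 < S) (hu : u ∈ Icc (m * U) U) (hv : v ∈ Icc (m * U) U)
    (hu' : u' ∈ Icc (m * U) U) (hv' : v' ∈ Icc (m * U) U)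
    (ha : 0 ≤ a) (hb : 0 ≤ b) (hab : a + b = S)
    (ha' : 0 ≤ a') (hb' : 0 ≤ b') (hab' : a' + b' = S) :
    |share u v a b - share u' v' a' b'| ≤
      (U * |a - a'| + S * (|u - u'| + |v - v'|)) / (m ^ 2 * U * S) := by
  have hmU : 0 < m * U := mul_pos hm hU
  have hD : m * U * S ≤ u * a + v * b := by nlinarith [hu.1, hv.1]
  have hD' : m * U * S ≤ u' * a' + v' * b' := by nlinarith [hu'.1, hv'.1]
  have hDpos : 0 < m * U * S := by positivity
  -- the numerator `u a v' b' - u' a' v b`, split into a change of `a` and of the weights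
  have hnum : u * a * (u' * a' + v' * b') - (u * a + v * b) * (u' * a') =
      S * u * v' * (a - a') + a' * b * (u * (v' - v) + v * (u - u')) := by
    rw [← hab, ← sub_eq_of_eq_add' hab.symm, ← sub_eq_of_eq_add' hab'.symm]; ring
  have hweights : |u * (v' - v) + v * (u - u')| ≤ U * (|u - u'| + |v - v'|) := by
    calc |u * (v' - v) + v * (u - u')| ≤ u * |v' - v| + v * |u - u'| := by
          refine (abs_add_le _ _).trans ?_
          rw [abs_mul, abs_mul, abs_of_nonneg (hmU.le.trans hu.1),
            abs_of_nonneg (hmU.le.trans hv.1)]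
      _ ≤ U * |v' - v| + U * |u - u'| := by gcongr; exacts [hu.2, hv.2]
      _ = U * (|u - u'| + |v - v'|) := by rw [abs_sub_comm v']; ring
  have hN : |S * u * v' * (a - a') + a' * b * (u * (v' - v) + v * (u - u'))| ≤
      U * S * (U * |a - a'| + S * (|u - u'| + |v - v'|)) := by
    have ha'S : a' ≤ S := by linarith
    have hbS : b ≤ S := by linarith
    have hu0 : 0 ≤ u := hmU.le.trans hu.1
    have hv'0 : 0 ≤ v' := hmU.le.trans hv'.1
    refine (abs_add_le _ _).trans ?_
    rw [abs_mul, abs_mul (a' * b), abs_of_nonneg (by positivity : 0 ≤ S * u * v'),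
      abs_of_nonneg (mul_nonneg ha' hb)]
    have h1 : S * u * v' ≤ S * U * U := by
      gcongr; exacts [hu.2, hv'.2]
    have h2 : a' * b ≤ S * S := mul_le_mul ha'S hbS hb hS.le
    nlinarith [abs_nonneg (a - a'), abs_nonneg (u * (v' - v) + v * (u - u')),
      mul_le_mul h2 hweights (abs_nonneg _) (by positivity)]
  unfold share
  rw [div_sub_div _ _ (hDpos.trans_le hD).ne' (hDpos.trans_le hD').ne', hnum, abs_div,
    abs_of_pos (mul_pos (hDpos.trans_le hD) (hDpos.trans_le hD'))]
  calc _ ≤ U * S * (U * |a - a'| + S * (|u - u'| + |v - v'|)) / ((m * U * S) * (m * U * S)) :=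
        div_le_div₀ (by positivity) hN (by positivity) (mul_le_mul hD hD' hDpos.le (by linarith))
    _ = _ := by field_simp

theorem mul_add_mul_mem_Icc {m c₁ c₂ A B : ℝ} (hc₁ : c₁ ∈ Icc m 1) (hc₂ : c₂ ∈ Icc m 1)
    (hA : 0 ≤ A) (hB : 0 ≤ B) : c₁ * A + c₂ * B ∈ Icc (m * (A + B)) (A + B) :=
  ⟨by nlinarith [hc₁.1, hc₂.1], by nlinarith [hc₁.2, hc₂.2]⟩

theorem abs_weighted_sum_le {w₁ w₂ w₃ z₁ z₂ z₃ L : ℝ} (hw₁ : 0 ≤ w₁) (hw₂ : 0 ≤ w₂)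
    (hw₃ : 0 ≤ w₃) (hw : w₁ + w₂ + w₃ ≤ 1) (hz₁ : |z₁| ≤ L) (hz₂ : |z₂| ≤ L) (hz₃ : |z₃| ≤ L) :
    |w₁ * z₁ + w₂ * z₂ + w₃ * z₃| ≤ L := by
  have hL : 0 ≤ L := (abs_nonneg _).trans hz₁
  calc |w₁ * z₁ + w₂ * z₂ + w₃ * z₃| ≤ w₁ * |z₁| + w₂ * |z₂| + w₃ * |z₃| := by
        refine (abs_add_le _ _).trans (add_le_add ((abs_add_le _ _).trans ?_) ?_) <;>
          simp only [abs_mul, abs_of_nonneg hw₁, abs_of_nonneg hw₂, abs_of_nonneg hw₃, le_refl]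
    _ ≤ w₁ * L + w₂ * L + w₃ * L := by gcongr
    _ ≤ L := by nlinarith

theorem weighted_sum_mem_Icc {w₁ w₂ w₃ z₁ z₂ z₃ : ℝ} (hw₁ : 0 ≤ w₁) (hw₂ : 0 ≤ w₂)
    (hw₃ : 0 ≤ w₃) (hw : w₁ + w₂ + w₃ = 1) (hz₁ : z₁ ∈ Icc (0 : ℝ) 1) (hz₂ : z₂ ∈ Icc (0 : ℝ) 1)
    (hz₃ : z₃ ∈ Icc (0 : ℝ) 1) : w₁ * z₁ + w₂ * z₂ + w₃ * z₃ ∈ Icc (0 : ℝ) 1 :=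
  ⟨by have := hz₁.1; have := hz₂.1; have := hz₃.1; positivity,
    by nlinarith [hz₁.2, hz₂.2, hz₃.2]⟩

noncomputable def weightedMass (r p q δ c₁ c₂ t : ℝ) : ℝ :=
  c₁ * aR r p q δ t + c₂ * aB r p q δ t

section DMPA

variable {r p q b e δ m : ℝ}

theorem aR_add_aB (t : ℝ) : aR r p q δ t + aB r p q δ t = 1 + sVal p q δ := by
  unfold aR aB; ring

theorem aR_sub_aR (t t' : ℝ) : aR r p q δ t - aR r p q δ t' = t - t' := by
  unfold aR; ring

theorem aR_nonneg {t : ℝ} (hr : r ∈ Icc (0 : ℝ) 1) (hs : 0 ≤ sVal p q δ)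
    (ht : t ∈ Icc (0 : ℝ) 1) : 0 ≤ aR r p q δ t :=
  add_nonneg ht.1 (mul_nonneg hr.1 hs)

theorem aB_nonneg {t : ℝ} (hr : r ∈ Icc (0 : ℝ) 1) (hs : 0 ≤ sVal p q δ)
    (ht : t ∈ Icc (0 : ℝ) 1) : 0 ≤ aB r p q δ t :=
  add_nonneg (sub_nonneg.2 ht.2) (mul_nonneg (sub_nonneg.2 hr.2) hs)

theorem weightedMass_mem_Icc {c₁ c₂ t : ℝ} (hr : r ∈ Icc (0 : ℝ) 1) (hs : 0 ≤ sVal p q δ)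
    (hc₁ : c₁ ∈ Icc m 1) (hc₂ : c₂ ∈ Icc m 1) (ht : t ∈ Icc (0 : ℝ) 1) :
    weightedMass r p q δ c₁ c₂ t ∈ Icc (m * (1 + sVal p q δ)) (1 + sVal p q δ) := by
  rw [← aR_add_aB t]
  exact mul_add_mul_mem_Icc hc₁ hc₂ (aR_nonneg hr hs ht) (aB_nonneg hr hs ht)

theorem abs_weightedMass_sub_le {c₁ c₂ : ℝ} (hc₁ : c₁ ∈ Icc (0 : ℝ) 1)
    (hc₂ : c₂ ∈ Icc (0 : ℝ) 1) (t t' : ℝ) :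
    |weightedMass r p q δ c₁ c₂ t - weightedMass r p q δ c₁ c₂ t'| ≤ |t - t'| := by
  have h : weightedMass r p q δ c₁ c₂ t - weightedMass r p q δ c₁ c₂ t' =
      (c₁ - c₂) * (t - t') := by
    unfold weightedMass aR aB; ring
  rw [h, abs_mul]
  exact mul_le_of_le_one_left (abs_nonneg _)
    (abs_le.2 ⟨by linarith [hc₁.1, hc₂.2], by linarith [hc₁.2, hc₂.1]⟩)

theorem abs_share_aR_aB_sub_le {c₁ c₂ t t' : ℝ} (hr : r ∈ Icc (0 : ℝ) 1) (hs : 0 ≤ sVal p q δ)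
    (hm : 0 < m) (hc₁ : c₁ ∈ Icc m 1) (hc₂ : c₂ ∈ Icc m 1)
    (ht : t ∈ Icc (0 : ℝ) 1) (ht' : t' ∈ Icc (0 : ℝ) 1) :
    |share c₁ c₂ (aR r p q δ t) (aB r p q δ t) - share c₁ c₂ (aR r p q δ t') (aB r p q δ t')|
      ≤ |t - t'| / (m ^ 2 * (1 + sVal p q δ)) := by
  rw [← mul_one m] at hc₁ hc₂
  simpa [aR_sub_aR] using abs_share_sub_share_le hm one_pos (by linarith) hc₁ hc₂ hc₁ hc₂
    (aR_nonneg hr hs ht) (aB_nonneg hr hs ht) (aR_add_aB t)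
    (aR_nonneg hr hs ht') (aB_nonneg hr hs ht') (aR_add_aB t')

theorem abs_share_weightedMass_sub_le {c₁ c₂ c₃ c₄ t t' τ τ' : ℝ} (hr : r ∈ Icc (0 : ℝ) 1)
    (hs : 0 ≤ sVal p q δ) (hm : 0 < m) (hc₁ : c₁ ∈ Icc m 1) (hc₂ : c₂ ∈ Icc m 1)
    (hc₃ : c₃ ∈ Icc m 1) (hc₄ : c₄ ∈ Icc m 1) (ht : t ∈ Icc (0 : ℝ) 1) (ht' : t' ∈ Icc (0 : ℝ) 1)
    (hτ : τ ∈ Icc (0 : ℝ) 1) (hτ' : τ' ∈ Icc (0 : ℝ) 1) :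
    |share (weightedMass r p q δ c₁ c₂ τ) (weightedMass r p q δ c₃ c₄ τ)
        (aR r p q δ t) (aB r p q δ t) -
      share (weightedMass r p q δ c₁ c₂ τ') (weightedMass r p q δ c₃ c₄ τ')
        (aR r p q δ t') (aB r p q δ t')|
      ≤ (|t - t'| + 2 * |τ - τ'|) / (m ^ 2 * (1 + sVal p q δ)) := by
  have hS : 0 < 1 + sVal p q δ := by linarith
  have hunit : ∀ {c}, c ∈ Icc m 1 → c ∈ Icc (0 : ℝ) 1 := fun hc ↦ ⟨hm.le.trans hc.1, hc.2⟩
  calc _ ≤ ((1 + sVal p q δ) * |aR r p q δ t - aR r p q δ t'| +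
          (1 + sVal p q δ) * (|weightedMass r p q δ c₁ c₂ τ - weightedMass r p q δ c₁ c₂ τ'| +
            |weightedMass r p q δ c₃ c₄ τ - weightedMass r p q δ c₃ c₄ τ'|)) /
          (m ^ 2 * (1 + sVal p q δ) * (1 + sVal p q δ)) :=
        abs_share_sub_share_le hm hS hS (weightedMass_mem_Icc hr hs hc₁ hc₂ hτ)
          (weightedMass_mem_Icc hr hs hc₃ hc₄ hτ) (weightedMass_mem_Icc hr hs hc₁ hc₂ hτ')
          (weightedMass_mem_Icc hr hs hc₃ hc₄ hτ') (aR_nonneg hr hs ht) (aB_nonneg hr hs ht)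
          (aR_add_aB t) (aR_nonneg hr hs ht') (aB_nonneg hr hs ht') (aR_add_aB t')
    _ ≤ ((1 + sVal p q δ) * |t - t'| + (1 + sVal p q δ) * (|τ - τ'| + |τ - τ'|)) /
          (m ^ 2 * (1 + sVal p q δ) * (1 + sVal p q δ)) := by
        rw [aR_sub_aR]
        have h₁₂ := abs_weightedMass_sub_le (r := r) (p := p) (q := q) (δ := δ)
          (hunit hc₁) (hunit hc₂) τ τ'
        have h₃₄ := abs_weightedMass_sub_le (r := r) (p := p) (q := q) (δ := δ)
          (hunit hc₃) (hunit hc₄) τ τ'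
        gcongr
    _ = _ := by field_simp; ring

theorem P1RR_eq_share (x : ℝ) :
    P1RR r p q b e δ x = share e (1 - b) (aR r p q δ x) (aB r p q δ x) := by
  unfold P1RR share; rw [← aR_add_aB x]; ring_nf

theorem P1BR_eq_share (x : ℝ) :
    P1BR r p q b e δ x = share (1 - e) b (aR r p q δ x) (aB r p q δ x) := by
  unfold P1BR share; rw [← aR_add_aB x]; ring_nf

theorem P2RR_eq_share (y : ℝ) :
    P2RR r p q b e δ y = share e (1 - e) (aR r p q δ y) (aB r p q δ y) := by
  unfold P2RR share; rw [← aR_add_aB y]; ring_nf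

theorem P2BR_eq_share (y : ℝ) :
    P2BR r p q b e δ y = share (1 - b) b (aR r p q δ y) (aB r p q δ y) := by
  unfold P2BR share; rw [← aR_add_aB y]; ring_nf

theorem P3RR_add_P3BR_eq_share (x y : ℝ) :
    P3RR r p q b e δ x y + P3BR r p q b e δ x y =
      share (weightedMass r p q δ e (1 - e) y) (weightedMass r p q δ (1 - b) b y)
        (aR r p q δ x) (aB r p q δ x) := by
  unfold P3RR P3BR share
  rw [← add_div]
  congr 1
  · unfold weightedMass; ring
  · unfold D3 weightedMass aR aB; ring

theorem P3RR_add_P3RB_eq_share (x y : ℝ) :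
    P3RR r p q b e δ x y + P3RB r p q b e δ x y =
      share (weightedMass r p q δ e (1 - b) x) (weightedMass r p q δ (1 - e) b x)
        (aR r p q δ y) (aB r p q δ y) := by
  unfold P3RR P3RB share
  rw [← add_div]
  congr 1
  · unfold weightedMass; ring
  · unfold D3 weightedMass aR aB; ring

theorem F_mapsTo_unitSquare (hr : r ∈ Icc (0 : ℝ) 1) (hp : 0 ≤ p) (hq : 0 ≤ q)
    (hpq : p + q ≤ 1) (hs : 0 ≤ sVal p q δ) (hb : b ∈ Icc (0 : ℝ) 1) (he : e ∈ Icc (0 : ℝ) 1) :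
    MapsTo (F r p q b e δ) (Icc 0 1 ×ˢ Icc 0 1) (Icc 0 1 ×ˢ Icc 0 1) := by
  rintro ⟨x, y⟩ ⟨hx, hy⟩
  have hb' : 1 - b ∈ Icc (0 : ℝ) 1 := ⟨sub_nonneg.2 hb.2, by linarith [hb.1]⟩
  have he' : 1 - e ∈ Icc (0 : ℝ) 1 := ⟨sub_nonneg.2 he.2, by linarith [he.1]⟩
  have hshare : ∀ {c₁ c₂ t : ℝ}, 0 ≤ c₁ → 0 ≤ c₂ → t ∈ Icc (0 : ℝ) 1 →
      share c₁ c₂ (aR r p q δ t) (aB r p q δ t) ∈ Icc 0 1 := fun h₁ h₂ ht ↦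
    share_mem_Icc (mul_nonneg h₁ (aR_nonneg hr hs ht)) (mul_nonneg h₂ (aB_nonneg hr hs ht))
  have hmass : ∀ {c₁ c₂ t : ℝ}, c₁ ∈ Icc (0 : ℝ) 1 → c₂ ∈ Icc (0 : ℝ) 1 → t ∈ Icc (0 : ℝ) 1 →
      0 ≤ weightedMass r p q δ c₁ c₂ t := fun h₁ h₂ ht ↦ by
    simpa using (weightedMass_mem_Icc hr hs h₁ h₂ ht).1
  have hmix : ∀ {z₁ z₂ : ℝ}, z₁ ∈ Icc (0 : ℝ) 1 → z₂ ∈ Icc (0 : ℝ) 1 →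
      r * z₁ + (1 - r) * z₂ ∈ Icc (0 : ℝ) 1 := fun h₁ h₂ ↦ by
    simpa only [smul_eq_mul] using
      convex_Icc (0 : ℝ) 1 h₁ h₂ hr.1 (sub_nonneg.2 hr.2) (add_sub_cancel r 1)
  have hw : 0 ≤ 1 - p - q := by linarith
  refine ⟨weighted_sum_mem_Icc hp hq hw (by ring) (hmix ?_ ?_) hr ?_,
    weighted_sum_mem_Icc hp hq hw (by ring) hr (hmix ?_ ?_) ?_⟩
  · rw [P1RR_eq_share]; exact hshare he.1 hb'.1 hx
  · rw [P1BR_eq_share]; exact hshare he'.1 hb.1 hx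
  · rw [P3RR_add_P3BR_eq_share]; exact hshare (hmass he he' hy) (hmass hb' hb hy) hx
  · rw [P2RR_eq_share]; exact hshare he.1 he'.1 hy
  · rw [P2BR_eq_share]; exact hshare hb'.1 hb.1 hy
  · rw [P3RR_add_P3RB_eq_share]; exact hshare (hmass he hb' hx) (hmass he' hb hx) hy

theorem dist_F_le (hr : r ∈ Icc (0 : ℝ) 1) (hp : 0 ≤ p) (hq : 0 ≤ q) (hpq : p + q ≤ 1)
    (hs : 0 ≤ sVal p q δ) (hm : 0 < m) (hmb : m ≤ b) (hmb' : m ≤ 1 - b) (hme : m ≤ e)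
    (hme' : m ≤ 1 - e) {θ θ' : ℝ × ℝ} (hθ : θ ∈ Icc 0 1 ×ˢ Icc 0 1)
    (hθ' : θ' ∈ Icc 0 1 ×ˢ Icc 0 1) :
    dist (F r p q b e δ θ) (F r p q b e δ θ') ≤
      3 / (m ^ 2 * (1 + sVal p q δ)) * dist θ θ' := by
  obtain ⟨x, y⟩ := θ
  obtain ⟨x', y'⟩ := θ'
  obtain ⟨hx, hy⟩ := hθ
  obtain ⟨hx', hy'⟩ := hθ'
  have hb : b ∈ Icc m 1 := ⟨hmb, by linarith⟩
  have hb' : 1 - b ∈ Icc m 1 := ⟨hmb', by linarith⟩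
  have he : e ∈ Icc m 1 := ⟨hme, by linarith⟩
  have he' : 1 - e ∈ Icc m 1 := ⟨hme', by linarith⟩
  set d := dist (x, y) (x', y')
  have hdx : |x - x'| ≤ d := le_max_left _ _
  have hdy : |y - y'| ≤ d := le_max_right _ _
  have hK : 0 < m ^ 2 * (1 + sVal p q δ) := by positivity
  have hbound : ∀ {u v : ℝ}, |u| ≤ d → |v| ≤ d →
      (|u| + 2 * |v|) / (m ^ 2 * (1 + sVal p q δ)) ≤ 3 / (m ^ 2 * (1 + sVal p q δ)) * d :=
    fun hu hv ↦ by rw [div_mul_eq_mul_div]; gcongr; linarith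
  have hbound₁ : ∀ {u : ℝ}, |u| ≤ d →
      |u| / (m ^ 2 * (1 + sVal p q δ)) ≤ 3 / (m ^ 2 * (1 + sVal p q δ)) * d :=
    fun {u} hu ↦ by rw [div_mul_eq_mul_div]; gcongr; linarith [abs_nonneg u]
  rw [Prod.dist_eq, Real.dist_eq, Real.dist_eq]
  refine max_le ?_ ?_
  · have hdiff : (F r p q b e δ (x, y)).1 - (F r p q b e δ (x', y')).1 =
        p * r * (P1RR r p q b e δ x - P1RR r p q b e δ x') +
        p * (1 - r) * (P1BR r p q b e δ x - P1BR r p q b e δ x') +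
        (1 - p - q) * (P3RR r p q b e δ x y + P3BR r p q b e δ x y -
          (P3RR r p q b e δ x' y' + P3BR r p q b e δ x' y')) := by
      simp only [F]; ring
    rw [hdiff]
    refine abs_weighted_sum_le (mul_nonneg hp hr.1) (mul_nonneg hp (sub_nonneg.2 hr.2))
      (by linarith) (by linarith) ?_ ?_ ?_
    · rw [P1RR_eq_share, P1RR_eq_share]
      exact (abs_share_aR_aB_sub_le hr hs hm he hb' hx hx').trans (hbound₁ hdx)
    · rw [P1BR_eq_share, P1BR_eq_share]
      exact (abs_share_aR_aB_sub_le hr hs hm he' hb hx hx').trans (hbound₁ hdx)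
    · rw [P3RR_add_P3BR_eq_share, P3RR_add_P3BR_eq_share]
      exact (abs_share_weightedMass_sub_le hr hs hm he he' hb' hb hx hx' hy hy').trans
        (hbound hdx hdy)
  · have hdiff : (F r p q b e δ (x, y)).2 - (F r p q b e δ (x', y')).2 =
        q * r * (P2RR r p q b e δ y - P2RR r p q b e δ y') +
        q * (1 - r) * (P2BR r p q b e δ y - P2BR r p q b e δ y') +
        (1 - p - q) * (P3RR r p q b e δ x y + P3RB r p q b e δ x y -
          (P3RR r p q b e δ x' y' + P3RB r p q b e δ x' y')) := by
      simp only [F]; ring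
    rw [hdiff]
    refine abs_weighted_sum_le (mul_nonneg hq hr.1) (mul_nonneg hq (sub_nonneg.2 hr.2))
      (by linarith) (by linarith) ?_ ?_ ?_
    · rw [P2RR_eq_share, P2RR_eq_share]
      exact (abs_share_aR_aB_sub_le hr hs hm he he' hy hy').trans (hbound₁ hdy)
    · rw [P2BR_eq_share, P2BR_eq_share]
      exact (abs_share_aR_aB_sub_le hr hs hm hb' hb hy hy').trans (hbound₁ hdy)
    · rw [P3RR_add_P3RB_eq_share, P3RR_add_P3RB_eq_share]
      exact (abs_share_weightedMass_sub_le hr hs hm he hb' he' hb hy hy' hx hx').trans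
        (hbound hdy hdx)

theorem lipschitzOnWith_F (hr : r ∈ Icc (0 : ℝ) 1) (hp : 0 ≤ p) (hq : 0 ≤ q)
    (hpq : p + q ≤ 1) (hs : 0 ≤ sVal p q δ) (hm : 0 < m) (hmb : m ≤ b) (hmb' : m ≤ 1 - b)
    (hme : m ≤ e) (hme' : m ≤ 1 - e) (hlarge : 6 ≤ m ^ 2 * (1 + sVal p q δ)) :
    LipschitzOnWith 2⁻¹ (F r p q b e δ) (Icc 0 1 ×ˢ Icc 0 1) := by
  refine lipschitzOnWith_iff_dist_le_mul.2 fun θ hθ θ' hθ' ↦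
    (dist_F_le hr hp hq hpq hs hm hmb hmb' hme hme' hθ hθ').trans ?_
  gcongr
  rw [NNReal.coe_inv, NNReal.coe_ofNat, div_le_iff₀ (by positivity)]
  linarith

end DMPA

/-- Theorem 1 of the paper (fixed-point part): for sufficiently large `δ`, the
mean-field map `F` has a unique fixed point `θ*` in the unit square, and the
iterates `θ_{k+1} = F(θ_k)` converge to `θ*` from any initial point in the square. -/
theorem F_unique_fixed_point_and_convergence (r p q b e : ℝ)
    (hr0 : 0 ≤ r) (hr1 : r ≤ 1) (hb0 : 0 < b) (hb1 : b < 1) (he0 : 0 < e) (he1 : e < 1)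
    (hp : 0 ≤ p) (hq : 0 ≤ q) (hpq0 : 0 < p + q) (hpq : p + q ≤ 1) :
    ∃ δs : ℝ, 0 < δs ∧ ∀ δ : ℝ, δs < δ →
      ∃ θstar ∈ Set.Icc (0 : ℝ) 1 ×ˢ Set.Icc (0 : ℝ) 1,
        F r p q b e δ θstar = θstar ∧
        (∀ θ' ∈ Set.Icc (0 : ℝ) 1 ×ˢ Set.Icc (0 : ℝ) 1,
          F r p q b e δ θ' = θ' → θ' = θstar) ∧
        ∀ θ₀ ∈ Set.Icc (0 : ℝ) 1 ×ˢ Set.Icc (0 : ℝ) 1,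
          Filter.Tendsto (fun k : ℕ => (F r p q b e δ)^[k] θ₀) Filter.atTop (nhds θstar) := by
  set m := min (min b (1 - b)) (min e (1 - e))
  have hm : 0 < m := lt_min (lt_min hb0 (by linarith)) (lt_min he0 (by linarith))
  refine ⟨6 / ((p + q) * m ^ 2), by positivity, fun δ hδ ↦ ?_⟩
  have hδ0 : 0 < δ := (by positivity : 0 < 6 / ((p + q) * m ^ 2)).trans hδ
  have hs : 0 ≤ sVal p q δ := mul_nonneg hpq0.le hδ0.le
  have hlarge : 6 ≤ m ^ 2 * (1 + sVal p q δ) := by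
    have := (div_lt_iff₀ (by positivity)).1 hδ
    unfold sVal; nlinarith [sq_nonneg m]
  have hlip := lipschitzOnWith_F ⟨hr0, hr1⟩ hp hq hpq hs hm
    ((min_le_left _ _).trans (min_le_left _ _)) ((min_le_left _ _).trans (min_le_right _ _))
    ((min_le_right _ _).trans (min_le_left _ _)) ((min_le_right _ _).trans (min_le_right _ _))
    hlarge
  exact hlip.exists_unique_fixedPoint_tendsto (by norm_num)
    (isClosed_Icc.prod isClosed_Icc).isComplete
    (F_mapsTo_unitSquare ⟨hr0, hr1⟩ hp hq hpq hs ⟨hb0.le, hb1.le⟩ ⟨he0.le, he1.le⟩)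
    (show ((0 : ℝ), (0 : ℝ)) ∈ Icc (0 : ℝ) 1 ×ˢ Icc (0 : ℝ) 1 by simp)
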